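/- arXiv:2112.10911 — 2 statements merged into one kernel-verified Lean document; each statement's English description precedes it below -/
import Mathlib

section
/- Let R = ℚ(v)[B, ς] be a commutative polynomial ring and [n] = (v^n − v^{−n})/(v − v^{−1}), [m]! = ∏_{k=1}^m [k]. Define the even-parity ı-divided powers B^{(2ℓ+1)}_{0̄} = (1/[2ℓ+1]!)·B·∏_{j=1}^{ℓ}(B² − vς[2j]²) and B^{(2ℓ)}_{0̄} = (1/[2ℓ]!)·B²·∏_{j=1}^{ℓ−1}(B² − vς[2j]²) for ℓ ≥ 1, with B^{(0)}_{0̄} = 1. Then for every ℓ ≥ 0: B·B^{(2ℓ+1)}_{0̄} = [2ℓ+2]·B^{(2ℓ+2)}_{0̄}, and for ℓ ≥ 1, B·B^{(2ℓ)}_{0̄} = [2ℓ+1]·B^{(2ℓ+1)}_{0̄} + vς[2ℓ]·B^{(2ℓ−1)}_{0̄}. -/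
/-!
Both recursions compare scalar multiples of the same product `∏ (B² − vς[2j]²)`, and the
scalar identities all reduce to `[m+1] · ([m+1]!)⁻¹ = ([m]!)⁻¹`. This needs `[m+1] ≠ 0`, which
holds because `v^(2n)` has degree `2n` and so is not `1`. In the second recursion the extra
factor `B² − vς[2ℓ+2]²` of `B^{(2ℓ+3)}` is cancelled by the term `vς[2ℓ+2]·B^{(2ℓ+1)}`.
-/

open MvPolynomial

/-- The quantum integer `[n] = (v^n - v^(-n))/(v - v⁻¹)` in `ℚ(v)`. -/
noncomputable def qint (n : ℤ) : RatFunc ℚ :=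
  ((RatFunc.X : RatFunc ℚ) ^ n - (RatFunc.X : RatFunc ℚ) ^ (-n)) /
    (RatFunc.X - (RatFunc.X : RatFunc ℚ)⁻¹)

/-- The quantum factorial `[m]! = [1][2]⋯[m]`. -/
noncomputable def qfac (m : ℕ) : RatFunc ℚ :=
  ∏ k ∈ Finset.range m, qint (k + 1)

/-- The polynomial ring `R = ℚ(v)[B, ς]`: `B = X 0`, `ς = X 1`. -/
noncomputable abbrev R9 := MvPolynomial (Fin 2) (RatFunc ℚ)

noncomputable def B : R9 := X 0
noncomputable def ς : R9 := X 1

/-- Odd-degree, even-parity ı-divided power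
`B^{(2ℓ+1)}_{0̄} = (1/[2ℓ+1]!)·B·∏_{j=1}^{ℓ}(B² − vς[2j]²)`. -/
noncomputable def oddDP0 (l : ℕ) : R9 :=
  C (qfac (2 * l + 1))⁻¹ * B *
    ∏ j ∈ Finset.range l, (B ^ 2 - C (RatFunc.X * qint (2 * j + 2) ^ 2) * ς)

/-- Even-degree, even-parity ı-divided power: `B^{(0)}_{0̄} = 1` and, for `ℓ ≥ 1`,
`B^{(2ℓ)}_{0̄} = (1/[2ℓ]!)·B²·∏_{j=1}^{ℓ−1}(B² − vς[2j]²)`. -/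
noncomputable def evenDP0 : ℕ → R9
  | 0 => 1
  | l + 1 =>
      C (qfac (2 * (l + 1)))⁻¹ * B ^ 2 *
        ∏ j ∈ Finset.range l, (B ^ 2 - C (RatFunc.X * qint (2 * j + 2) ^ 2) * ς)

namespace RatFunc

variable {K : Type*} [Field K]

theorem intDegree_X_zpow (n : ℤ) : (X ^ n : RatFunc K).intDegree = n := by
  have hpow (k : ℕ) : (X ^ k : RatFunc K).intDegree = k := by
    rw [← algebraMap_X, ← map_pow, intDegree_polynomial, Polynomial.natDegree_X_pow]
  obtain ⟨k, rfl | rfl⟩ := n.eq_nat_or_neg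
  · rw [zpow_natCast, hpow]
  · rw [zpow_neg, zpow_natCast, intDegree_inv, hpow]

theorem X_zpow_ne_one {n : ℤ} (hn : n ≠ 0) : (X ^ n : RatFunc K) ≠ 1 := fun h => by
  simpa [intDegree_X_zpow, hn] using congrArg intDegree h

theorem X_zpow_sub_X_zpow_neg_ne_zero {n : ℤ} (hn : n ≠ 0) :
    (X ^ n - X ^ (-n) : RatFunc K) ≠ 0 := by
  have hX : (X : RatFunc K) ≠ 0 := X_ne_zero
  rw [sub_ne_zero, Ne, ← div_eq_one_iff_eq (zpow_ne_zero _ hX), ← zpow_sub₀ hX]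
  exact X_zpow_ne_one (by omega)

end RatFunc

theorem qint_ne_zero {n : ℤ} (hn : n ≠ 0) : qint n ≠ 0 := by
  refine div_ne_zero (RatFunc.X_zpow_sub_X_zpow_neg_ne_zero hn) ?_
  simpa using RatFunc.X_zpow_sub_X_zpow_neg_ne_zero (K := ℚ) one_ne_zero

theorem qfac_ne_zero (m : ℕ) : qfac m ≠ 0 :=
  Finset.prod_ne_zero_iff.mpr fun _ _ => qint_ne_zero (by omega)

theorem qint_mul_inv_qfac_succ (m : ℕ) : qint (m + 1) * (qfac (m + 1))⁻¹ = (qfac m)⁻¹ := by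
  rw [qfac, Finset.prod_range_succ, ← qfac, mul_inv, mul_left_comm,
    mul_inv_cancel₀ (qint_ne_zero (by omega)), mul_one]

/-- The recursions for multiplication by `B` on the even-parity ı-divided powers:
`B·B^{(2ℓ+1)}_{0̄} = [2ℓ+2]·B^{(2ℓ+2)}_{0̄}` for every `ℓ ≥ 0`, and
`B·B^{(2ℓ)}_{0̄} = [2ℓ+1]·B^{(2ℓ+1)}_{0̄} + vς[2ℓ]·B^{(2ℓ−1)}_{0̄}` for every `ℓ ≥ 1`. -/
theorem iDividedPower_even_recursion :
    (∀ l : ℕ, B * oddDP0 l = C (qint (2 * l + 2)) * evenDP0 (l + 1)) ∧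
    (∀ l : ℕ, B * evenDP0 (l + 1) = C (qint (2 * (l + 1) + 1)) * oddDP0 (l + 1) +
      C (RatFunc.X * qint (2 * (l + 1))) * ς * oddDP0 l) := by
  have even_coef (l : ℕ) :
      (C (qint (2 * l + 2)) : R9) * C (qfac (2 * (l + 1)))⁻¹ = C (qfac (2 * l + 1))⁻¹ := by
    rw [← C_mul]
    simpa [mul_add, add_assoc] using congrArg C (qint_mul_inv_qfac_succ (2 * l + 1))
  have odd_coef (l : ℕ) : (C (qint (2 * (l + 1) + 1)) : R9) * C (qfac (2 * (l + 1) + 1))⁻¹ =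
      C (qfac (2 * (l + 1)))⁻¹ := by
    rw [← C_mul]
    simpa using congrArg C (qint_mul_inv_qfac_succ (2 * (l + 1)))
  refine ⟨fun l => ?_, fun l => ?_⟩
  · rw [oddDP0, evenDP0]
    generalize ∏ j ∈ Finset.range l, (B ^ 2 - C (RatFunc.X * qint (2 * j + 2) ^ 2) * ς) = P
    linear_combination (-(B ^ 2 * P)) * even_coef l
  · rw [oddDP0, oddDP0, evenDP0, Finset.prod_range_succ,
      show qint (2 * (l + 1)) = qint (2 * l + 2) from congrArg qint (by ring)]
    generalize ∏ j ∈ Finset.range l, (B ^ 2 - C (RatFunc.X * qint (2 * j + 2) ^ 2) * ς) = P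
    simp only [map_mul, map_pow]
    linear_combination
      (-(B * P * (B ^ 2 - C RatFunc.X * C (qint (2 * l + 2)) ^ 2 * ς))) * odd_coef l +
        (C RatFunc.X * C (qint (2 * l + 2)) * ς * B * P) * even_coef l
end

section
/- Let (W, ≤) be a partially ordered set such that every lower interval {w : w ≤ σ} is finite. Let M be a free ℤ[v, v^{−1}]-module with basis {M_σ : σ ∈ W}, and let ψ : M → M be a ℤ-linear involution satisfying ψ(v^n x) = v^{−n} ψ(x) and ψ(M_σ) ∈ M_σ + Σ_{w < σ} ℤ[v, v^{−1}] M_w for all σ. Then for each σ ∈ W there exists a unique element C_σ ∈ M with ψ(C_σ) = C_σ and C_σ ∈ M_σ + Σ_{w < σ} v^{−1}ℤ[v^{−1}] M_w. -/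
/-!
Uniqueness: the difference of two solutions is a `ψ`-invariant element with all coordinates in
`v⁻¹ℤ[v⁻¹]`. At a maximal index `τ` of its support, triangularity of `ψ` makes the
`τ`-coordinate bar-invariant, and a bar-invariant element of `v⁻¹ℤ[v⁻¹]` is zero.

Existence: `D = ψ(M_σ) - M_σ` satisfies `ψ D = -D` and lives on the finite lower set
`{w < σ}`; it suffices to write `D = p - ψ p` with `p` having coordinates in `v⁻¹ℤ[v⁻¹]`,
and then `C_σ = M_σ + p`. At a maximal `τ` of the lower set, the `τ`-coordinate `d` of `D` is
bar-antisymmetric, so `d = q - bar q` for `q` the negative part of `d`; subtracting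
`q M_τ - ψ(q M_τ)` removes `τ` from the lower set, and we conclude by induction.
-/

open LaurentPolynomial

namespace LaurentPolynomial

variable {R : Type*} [CommRing R]

variable (R) in
/-- The paper's `v⁻¹ℤ[v⁻¹]`, over an arbitrary coefficient ring. -/
def negDegreeSubgroup : AddSubgroup R[T;T⁻¹] where
  carrier := {p | ∀ n, 0 ≤ n → p.coeff n = 0}
  zero_mem' _ _ := rfl
  add_mem' hp hq n hn := by simp [hp n hn, hq n hn]
  neg_mem' hp n hn := by simp [hp n hn]

theorem T_mem_negDegreeSubgroup {n : ℤ} (hn : n < 0) :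
    (T n : R[T;T⁻¹]) ∈ negDegreeSubgroup R := by
  intro m hm
  rw [T, AddMonoidAlgebra.coeff_single, Finsupp.single_apply, if_neg (by omega)]

theorem eq_zero_of_invert_eq_self {p : R[T;T⁻¹]} (hp : p ∈ negDegreeSubgroup R)
    (hinv : invert p = p) : p = 0 := by
  ext n
  rcases le_or_gt 0 n with hn | hn
  · exact hp n hn
  · rw [← hinv, invert_apply]
    exact hp (-n) (by omega)

noncomputable def negPart (p : R[T;T⁻¹]) : R[T;T⁻¹] :=
  AddMonoidAlgebra.ofCoeff (p.coeff.filter (· < 0))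

theorem coeff_negPart (p : R[T;T⁻¹]) (n : ℤ) :
    (negPart p).coeff n = if n < 0 then p.coeff n else 0 :=
  Finsupp.filter_apply _ _ _

theorem negPart_mem_negDegreeSubgroup (p : R[T;T⁻¹]) : negPart p ∈ negDegreeSubgroup R := by
  intro n hn
  simp [coeff_negPart, not_lt.2 hn]

theorem negPart_sub_invert_negPart [IsAddTorsionFree R] {p : R[T;T⁻¹]} (hp : invert p = -p) :
    negPart p - invert (negPart p) = p := by
  have hodd (n : ℤ) : p.coeff (-n) = -p.coeff n := by
    simpa using congrArg (fun q => q.coeff n) hp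
  ext n
  simp only [AddMonoidAlgebra.coeff_sub, Finsupp.sub_apply, invert_apply, coeff_negPart]
  rcases lt_trichotomy n 0 with hn | rfl | hn
  · simp [hn, hn.not_gt]
  · have h0 : p.coeff 0 = 0 := self_eq_neg.1 (by simpa using hodd 0)
    simp [h0]
  · simp [show ¬ n < 0 by omega, hn, hodd n]

end LaurentPolynomial

open Submodule Set

namespace Module.Basis

section Coordinates

variable {R : Type*} [CommRing R] {W : Type*} {M : Type*} [AddCommGroup M]
  [Module R[T;T⁻¹] M] (b : Basis W R[T;T⁻¹] M)

def negLattice : AddSubgroup M where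
  carrier := {x | ∀ w, b.repr x w ∈ negDegreeSubgroup R}
  zero_mem' _ := by simp [zero_mem]
  add_mem' hx hy w := by simpa using add_mem (hx w) (hy w)
  neg_mem' hx w := by simpa using neg_mem (hx w)

variable {b}

theorem smul_mem_negLattice {q : R[T;T⁻¹]} (hq : q ∈ negDegreeSubgroup R) (w : W) :
    q • b w ∈ b.negLattice := by
  classical
  intro u
  rw [map_smul, repr_self, Finsupp.smul_apply, Finsupp.single_apply]
  split_ifs
  · simpa using hq
  · simp [zero_mem]

theorem repr_apply_eq_zero_of_mem_span {S : Set W} {x : M} (hx : x ∈ span R[T;T⁻¹] (b '' S))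
    {w : W} (hw : w ∉ S) : b.repr x w = 0 :=
  Finsupp.notMem_support_iff.1 fun h => hw (b.mem_span_image.1 hx h)

end Coordinates

variable {R : Type*} [CommRing R] {W : Type*} [PartialOrder W] {M : Type*} [AddCommGroup M]
  [Module R[T;T⁻¹] M] {b : Basis W R[T;T⁻¹] M}
  (ψ : M →ₛₗ[((invert : R[T;T⁻¹] ≃ₐ[R] R[T;T⁻¹]) : R[T;T⁻¹] →+* R[T;T⁻¹])] M)

theorem map_mem_span_of_isLowerSet (htri : ∀ w, ψ (b w) - b w ∈ span R[T;T⁻¹] (b '' Iio w))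
    {S : Set W} (hS : IsLowerSet S) {x : M} (hx : x ∈ span R[T;T⁻¹] (b '' S)) :
    ψ x ∈ span R[T;T⁻¹] (b '' S) := by
  induction hx using Submodule.span_induction with
  | mem _ hx =>
    obtain ⟨w, hw, rfl⟩ := hx
    have hlower : span R[T;T⁻¹] (b '' Iio w) ≤ span R[T;T⁻¹] (b '' S) :=
      span_mono (image_mono fun _ hu => hS (le_of_lt hu) hw)
    simpa using add_mem (subset_span (mem_image_of_mem b hw)) (hlower (htri w))
  | zero => simp
  | add _ _ _ _ hx hy => simpa using add_mem hx hy
  | smul r _ _ hx => simpa using smul_mem _ _ hx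

theorem repr_map_apply_of_forall_not_lt
    (htri : ∀ w, ψ (b w) - b w ∈ span R[T;T⁻¹] (b '' Iio w))
    {S : Set W} {x : M} (hx : x ∈ span R[T;T⁻¹] (b '' S))
    {τ : W} (hτ : ∀ w ∈ S, ¬ τ < w) :
    b.repr (ψ x) τ = invert (b.repr x τ) := by
  classical
  induction hx using Submodule.span_induction with
  | mem _ hx =>
    obtain ⟨w, hw, rfl⟩ := hx
    have hlower : b.repr (ψ (b w) - b w) τ = 0 :=
      repr_apply_eq_zero_of_mem_span (htri w) (hτ w hw)
    rw [map_sub, Finsupp.sub_apply, sub_eq_zero] at hlower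
    rw [hlower, repr_self, Finsupp.single_apply]
    split_ifs <;> simp
  | zero => simp
  | add _ _ _ _ hx hy => simp [hx, hy]
  | smul r _ _ hx => simp [hx]

theorem eq_zero_of_map_eq_self_of_mem_negLattice
    (htri : ∀ w, ψ (b w) - b w ∈ span R[T;T⁻¹] (b '' Iio w))
    {x : M} (hψx : ψ x = x) (hx : x ∈ b.negLattice) : x = 0 := by
  classical
  by_contra hne
  obtain ⟨τ, hτ⟩ := Finset.exists_maximal
    (Finsupp.support_nonempty_iff.2 (b.repr.map_ne_zero_iff.2 hne))
  have hbar : invert (b.repr x τ) = b.repr x τ := by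
    rw [← repr_map_apply_of_forall_not_lt ψ htri (b.mem_span_image.2 Subset.rfl)
      fun _ hw => hτ.not_gt hw, hψx]
  exact Finsupp.mem_support_iff.1 hτ.prop (eq_zero_of_invert_eq_self (hx τ) hbar)

theorem exists_mem_negLattice_sub_sub_map_mem_span_diff [IsAddTorsionFree R]
    (htri : ∀ w, ψ (b w) - b w ∈ span R[T;T⁻¹] (b '' Iio w))
    {S : Set W} (hS : IsLowerSet S) {τ : W} (hτ : Maximal (· ∈ S) τ)
    {D : M} (hD : D ∈ span R[T;T⁻¹] (b '' S)) (hψD : ψ D = -D) :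
    ∃ y ∈ span R[T;T⁻¹] (b '' S), y ∈ b.negLattice ∧
      D - (y - ψ y) ∈ span R[T;T⁻¹] (b '' (S \ {τ})) := by
  have hτS : ∀ w ∈ S, ¬ τ < w := fun _ hw => hτ.not_gt hw
  have hbar : invert (b.repr D τ) = -b.repr D τ := by
    rw [← repr_map_apply_of_forall_not_lt ψ htri hD hτS, hψD, map_neg, Finsupp.neg_apply]
  set q := negPart (b.repr D τ)
  have hy : q • b τ ∈ span R[T;T⁻¹] (b '' S) :=
    smul_mem _ _ (subset_span (mem_image_of_mem b hτ.prop))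
  refine ⟨q • b τ, hy, smul_mem_negLattice (negPart_mem_negDegreeSubgroup _) τ, ?_⟩
  rw [b.mem_span_image]
  intro w hw
  have hD' := sub_mem hD (sub_mem hy (map_mem_span_of_isLowerSet ψ htri hS hy))
  refine ⟨b.mem_span_image.1 hD' hw, ?_⟩
  rintro rfl
  apply Finsupp.mem_support_iff.1 hw
  rw [map_sub, map_sub, Finsupp.sub_apply, Finsupp.sub_apply,
    repr_map_apply_of_forall_not_lt ψ htri hy hτS, map_smul, repr_self, Finsupp.smul_apply,
    Finsupp.single_eq_same, smul_eq_mul, mul_one, negPart_sub_invert_negPart hbar, sub_self]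

theorem exists_mem_negLattice_sub_map_eq [IsAddTorsionFree R] (hinvol : ∀ x, ψ (ψ x) = x)
    (htri : ∀ w, ψ (b w) - b w ∈ span R[T;T⁻¹] (b '' Iio w))
    (S : Finset W) (hS : IsLowerSet (S : Set W))
    {D : M} (hD : D ∈ span R[T;T⁻¹] (b '' S)) (hψD : ψ D = -D) :
    ∃ p ∈ span R[T;T⁻¹] (b '' S), p ∈ b.negLattice ∧ p - ψ p = D := by
  classical
  induction S using Finset.strongInduction generalizing D with
  | H S ih =>
    obtain rfl | hne := S.eq_empty_or_nonempty
    · refine ⟨0, zero_mem _, zero_mem _, ?_⟩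
      simpa [eq_comm] using hD
    obtain ⟨τ, hτ⟩ := Finset.exists_maximal hne
    obtain ⟨y, hy, hyneg, hD'⟩ :=
      exists_mem_negLattice_sub_sub_map_mem_span_diff ψ htri hS hτ hD hψD
    have hψD' : ψ (D - (y - ψ y)) = -(D - (y - ψ y)) := by
      simp only [map_sub, hψD, hinvol]
      abel
    obtain ⟨p, hp, hpneg, hpD⟩ := ih (S.erase τ) (Finset.erase_ssubset hτ.prop)
      (by simpa using hS.erase fun _ hw hle => hτ.eq_of_ge hw hle) (by simpa using hD') hψD'
    refine ⟨y + p, add_mem hy (span_mono (image_mono (S.erase_subset τ)) hp),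
      add_mem hyneg hpneg, ?_⟩
    rw [map_add, add_sub_add_comm, hpD]
    abel

theorem existsUnique_map_eq_self_sub_mem [IsAddTorsionFree R] (hinvol : ∀ x, ψ (ψ x) = x)
    (htri : ∀ w, ψ (b w) - b w ∈ span R[T;T⁻¹] (b '' Iio w))
    {σ : W} (hσ : (Iio σ).Finite) :
    ∃! c, ψ c = c ∧
      c - b σ ∈ (span R[T;T⁻¹] (b '' Iio σ)).toAddSubgroup ⊓ b.negLattice := by
  obtain ⟨p, hp, hpneg, hpD⟩ := exists_mem_negLattice_sub_map_eq ψ hinvol htri hσ.toFinset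
    (by simpa using isLowerSet_Iio σ) (D := ψ (b σ) - b σ) (by simpa using htri σ)
    (by simp [hinvol])
  rw [hσ.coe_toFinset] at hp
  have hψp : ψ p = p - (ψ (b σ) - b σ) := by
    rw [← hpD]
    abel
  refine ⟨b σ + p, ⟨by rw [map_add, hψp]; abel, by simpa using ⟨hp, hpneg⟩⟩, ?_⟩
  rintro c ⟨hc, hcmem⟩
  have hcneg := (AddSubgroup.mem_inf.1 hcmem).2
  have hψ : ψ (c - (b σ + p)) = c - (b σ + p) := by
    rw [map_sub, map_add, hc, hψp]
    abel
  have hneg : c - (b σ + p) ∈ b.negLattice := by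
    simpa [sub_add_eq_sub_sub] using sub_mem hcneg hpneg
  exact sub_eq_zero.1 (eq_zero_of_map_eq_self_of_mem_negLattice ψ htri hψ hneg)

end Module.Basis

section IntegerLaurent

variable {W : Type*} {M : Type*} [AddCommGroup M] [Module ℤ[T;T⁻¹] M]

theorem AddMonoidHom.map_smul_of_map_T_smul (ψ : M →+ M)
    (h : ∀ (n : ℤ) (x : M), ψ ((T n : ℤ[T;T⁻¹]) • x) = (T (-n) : ℤ[T;T⁻¹]) • ψ x)
    (p : ℤ[T;T⁻¹]) (x : M) : ψ (p • x) = invert p • ψ x := by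
  induction p using LaurentPolynomial.induction_on' with
  | add p q hp hq => simp only [add_smul, map_add, hp, hq]
  | C_mul_T n a =>
    rw [← smul_eq_C_mul, smul_assoc, map_zsmul, h, map_zsmul, invert_T, smul_assoc]

theorem Module.Basis.closure_T_smul_neg_eq (b : Basis W ℤ[T;T⁻¹] M) (S : Set W) :
    AddSubgroup.closure {x : M | ∃ w ∈ S, ∃ n < 0, x = (T n : ℤ[T;T⁻¹]) • b w} =
      (span ℤ[T;T⁻¹] (b '' S)).toAddSubgroup ⊓ b.negLattice := by
  apply le_antisymm
  · rw [AddSubgroup.closure_le]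
    rintro _ ⟨w, hw, n, hn, rfl⟩
    exact ⟨smul_mem _ _ (subset_span (mem_image_of_mem b hw)),
      smul_mem_negLattice (T_mem_negDegreeSubgroup hn) w⟩
  · intro x hx
    obtain ⟨hxS, hxneg⟩ := AddSubgroup.mem_inf.1 hx
    rw [← b.linearCombination_repr x, Finsupp.linearCombination_apply]
    refine AddSubgroup.sum_mem _ fun w hw => ?_
    have hwS : w ∈ S := b.mem_span_image.1 hxS hw
    show b.repr x w • b w ∈ _
    rw [← AddMonoidAlgebra.sum_coeff_single (b.repr x w), Finsupp.sum, Finset.sum_smul]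
    refine AddSubgroup.sum_mem _ fun n hn => ?_
    have hneg : n < 0 := not_le.1 fun h0 => Finsupp.mem_support_iff.1 hn (hxneg w n h0)
    rw [single_eq_C_mul_T, ← smul_eq_C_mul, smul_assoc]
    have hgen : (T n : ℤ[T;T⁻¹]) • b w ∈ {x : M | ∃ w ∈ S, ∃ n < 0, x = T n • b w} :=
      ⟨w, hwS, n, hneg, rfl⟩
    exact AddSubgroup.zsmul_mem _ (AddSubgroup.subset_closure hgen) _

end IntegerLaurent

/-- Abstract Kazhdan–Lusztig lemma.  Let `(W, ≤)` be a poset with finite lower intervals,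
`M` a free `ℤ[v,v⁻¹]`-module with basis `{M_σ}` (given by `b`), and `ψ` a ℤ-linear
involution with `ψ(vⁿ x) = v⁻ⁿ ψ(x)` and `ψ(M_σ) ∈ M_σ + Σ_{w<σ} ℤ[v,v⁻¹] M_w`.
Then for each `σ` there is a unique `ψ`-invariant `C_σ ∈ M_σ + Σ_{w<σ} v⁻¹ℤ[v⁻¹] M_w`. -/
theorem abstract_KL_basis {W : Type*} [PartialOrder W]
    (hfin : ∀ σ : W, {w : W | w ≤ σ}.Finite)
    {M : Type*} [AddCommGroup M] [Module (LaurentPolynomial ℤ) M]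
    (b : Module.Basis W (LaurentPolynomial ℤ) M)
    (ψ : M →+ M)
    (hinvol : ∀ x : M, ψ (ψ x) = x)
    (hsemi : ∀ (n : ℤ) (x : M),
      ψ ((T n : LaurentPolynomial ℤ) • x) = (T (-n) : LaurentPolynomial ℤ) • ψ x)
    (htri : ∀ σ : W, ψ (b σ) - b σ ∈
      AddSubgroup.closure {x : M | ∃ w : W, w < σ ∧
        ∃ n : ℤ, x = (T n : LaurentPolynomial ℤ) • b w})
    (σ : W) :
    ∃! c : M, ψ c = c ∧ c - b σ ∈
      AddSubgroup.closure {x : M | ∃ w : W, w < σ ∧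
        ∃ n : ℤ, n < 0 ∧ x = (T n : LaurentPolynomial ℤ) • b w} := by
  let ψ' : M →ₛₗ[((invert : ℤ[T;T⁻¹] ≃ₐ[ℤ] ℤ[T;T⁻¹]) : ℤ[T;T⁻¹] →+* ℤ[T;T⁻¹])] M :=
    { ψ with map_smul' := ψ.map_smul_of_map_T_smul hsemi }
  have htri' (w : W) : ψ' (b w) - b w ∈ span ℤ[T;T⁻¹] (b '' Iio w) := by
    refine (AddSubgroup.closure_le (K := (span ℤ[T;T⁻¹] (b '' Iio w)).toAddSubgroup)).2
      ?_ (htri w)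
    rintro _ ⟨u, hu, n, rfl⟩
    exact smul_mem _ _ (subset_span (mem_image_of_mem b hu))
  have hclosure := b.closure_T_smul_neg_eq (Iio σ)
  simp only [mem_Iio] at hclosure
  rw [hclosure]
  exact b.existsUnique_map_eq_self_sub_mem ψ' hinvol htri' ((hfin σ).subset fun _ => le_of_lt)
end
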